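/- Let m ≡ 0 (mod 4), let l and l̃ be even natural numbers with m ≤ l and m ≤ l̃, let N ≥ 1 be a natural number, and let k ≥ 6. If l̃ ≡ l (mod 2^N), then σ_{l̃}^m(k) ≡ σ_l^m(k) (mod 2^{N+1}). -/

import Mathlib

/-- The coefficient `σ_l^m(k)` of the Holt–Ille polynomial `H_l^m`. -/
def sigmaLM (l m k : ℕ) : ℚ :=
  if (l + m) % 2 = 0 then
    (-2 : ℚ) ^ k * (((l - m) / 2).choose k : ℚ) * (((l + m) / 2).choose k : ℚ) /
      (((2 * k).choose k : ℚ))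
  else
    (-2 : ℚ) ^ k * (((l - m) / 2).choose k : ℚ) * (((l + m) / 2).choose k : ℚ) /
      ((((2 * k).choose k : ℚ)) * (2 * (k : ℚ) + 1))

/-- The value `H_l^m(−2) = Σ_{k=0}^{⌊(l−m)/2⌋} σ_l^m(k)`. -/
def HLM (l m : ℕ) : ℚ := ∑ k ∈ Finset.range ((l - m) / 2 + 1), sigmaLM l m k

/-- `a ≡ b (mod 2^N)` for rationals (with odd denominators), expressed via the 2-adic
norm on `ℚ₂`: it means `‖a − b‖₂ ≤ 2^(−N)`. -/
def Cong2 (a b : ℚ) (N : ℕ) : Prop :=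
  ‖((a - b : ℚ) : ℚ_[2])‖ ≤ (2 : ℝ) ^ (-(N : ℤ))

/-! The `2`-adic valuation of `(-2)^k / C(2k, k)` equals that of `k!`: indeed
`C(2k, k) · k! = 2^k · (2k-1)‼` with `(2k-1)‼` odd, so for even `l + m`
`σ_l^m(k) = (-1)^k · k! · C(a, k) · C(b, k) / (2k-1)‼` with `a = (l-m)/2`, `b = (l+m)/2`.
Passing from `l` to `l̃ = l + 2c` replaces `a, b` by `a + c, b + c`, and by Vandermonde
`C(x + c, k) - C(x, k) = ∑_{i<k} C(x, i) C(c, k - i)`. Each `k! · C(c, j)` with `1 ≤ j ≤ k`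
is divisible by `2^(N+1)`, because `j · C(c, j) = c · C(c-1, j-1)`, `2^N ∣ 2c`, and
`4j ∣ k!` once `k ≥ 6`. -/

open Nat Finset

namespace Nat

theorem odd_doubleFactorial {n : ℕ} (hn : Odd n) : Odd n‼ := by
  obtain ⟨j, rfl⟩ := hn
  induction j with
  | zero => exact odd_one
  | succ j ih =>
    rw [show 2 * (j + 1) + 1 = 2 * j + 1 + 2 by ring, doubleFactorial_add_two]
    exact Odd.mul ⟨j + 1, by ring⟩ ih

theorem factorial_two_mul_eq_doubleFactorial_mul (k : ℕ) :
    (2 * k)! = (2 * k)‼ * (2 * k - 1)‼ := by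
  cases k with
  | zero => rfl
  | succ k =>
    rw [show 2 * (k + 1) = 2 * k + 1 + 1 by ring, factorial_eq_mul_doubleFactorial]
    rfl

theorem choose_two_mul_mul_factorial (k : ℕ) :
    (2 * k).choose k * k ! = 2 ^ k * (2 * k - 1)‼ := by
  apply Nat.eq_of_mul_eq_mul_right (factorial_pos k)
  calc (2 * k).choose k * k ! * k ! = (2 * k)! := by
        simpa [show 2 * k - k = k by omega] using
          choose_mul_factorial_mul_factorial (show k ≤ 2 * k by omega)
    _ = 2 ^ k * (2 * k - 1)‼ * k ! := by
        rw [factorial_two_mul_eq_doubleFactorial_mul, doubleFactorial_two_mul]; ring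

theorem four_mul_dvd_factorial {j k : ℕ} (hj : j ≠ 0) (hjk : j ≤ k) (hk : 6 ≤ k) :
    4 * j ∣ k ! := by
  by_cases hj4 : j = 4
  · subst hj4
    exact (by decide : 16 ∣ 6 !).trans (factorial_dvd_factorial hk)
  · have hpair : ∏ x ∈ ({4, j} : Finset ℕ), x = 4 * j := prod_pair (Ne.symm hj4)
    rw [← hpair, ← prod_Ico_id_eq_factorial]
    exact prod_dvd_prod_of_subset _ _ _ fun x hx => by simp at hx ⊢; omega

theorem mul_choose_eq_mul_choose_pred (c j : ℕ) (hj : j ≠ 0) :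
    j * c.choose j = c * (c - 1).choose (j - 1) := by
  obtain ⟨i, rfl⟩ := exists_eq_succ_of_ne_zero hj
  cases c with
  | zero => simp
  | succ c => simpa [mul_comm] using (add_one_mul_choose_eq c i).symm

theorem two_pow_succ_dvd_factorial_mul_choose {c j k n : ℕ} (hc : 2 ^ n ∣ 2 * c) (hj : j ≠ 0)
    (hjk : j ≤ k) (hk : 6 ≤ k) : 2 ^ (n + 1) ∣ k ! * c.choose j := by
  obtain ⟨t, ht⟩ := four_mul_dvd_factorial hj hjk hk
  have key : k ! * c.choose j = 2 * (2 * c) * (t * (c - 1).choose (j - 1)) := by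
    rw [ht, show 4 * j * t * c.choose j = 4 * t * (j * c.choose j) by ring,
      mul_choose_eq_mul_choose_pred c j hj]
    ring
  rw [key, pow_succ', mul_assoc]
  exact mul_dvd_mul_left 2 (hc.mul_right _)

theorem choose_add_eq_choose_add_sum (x c k : ℕ) :
    (x + c).choose k = x.choose k + ∑ i ∈ range k, x.choose i * c.choose (k - i) := by
  rw [add_choose_eq, Nat.sum_antidiagonal_eq_sum_range_succ_mk, sum_range_succ]
  simp [Nat.add_comm]

theorem two_pow_succ_dvd_factorial_mul_choose_add_sub {c k n : ℕ} (hc : 2 ^ n ∣ 2 * c)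
    (hk : 6 ≤ k) (x : ℕ) :
    (2 : ℤ) ^ (n + 1) ∣ k ! * (((x + c).choose k : ℤ) - x.choose k) := by
  rw [choose_add_eq_choose_add_sum]
  push_cast
  rw [add_sub_cancel_left, mul_sum]
  refine dvd_sum fun i hi => ?_
  have hi : i < k := mem_range.mp hi
  have h := two_pow_succ_dvd_factorial_mul_choose hc (j := k - i) (by omega) (by omega) hk
  rw [mul_left_comm]
  exact Dvd.dvd.mul_left (by exact_mod_cast h) _

theorem two_pow_succ_dvd_factorial_mul_choose_mul_choose_sub {c k n : ℕ} (hc : 2 ^ n ∣ 2 * c)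
    (hk : 6 ≤ k) (a b : ℕ) :
    (2 : ℤ) ^ (n + 1) ∣ k ! * (((a + c).choose k : ℤ) * (b + c).choose k
      - (a.choose k : ℤ) * b.choose k) := by
  have ha := two_pow_succ_dvd_factorial_mul_choose_add_sub hc hk a
  have hb := two_pow_succ_dvd_factorial_mul_choose_add_sub hc hk b
  rw [show (k ! : ℤ) * (((a + c).choose k : ℤ) * (b + c).choose k
        - (a.choose k : ℤ) * b.choose k)
      = k ! * (((a + c).choose k : ℤ) - a.choose k) * (b + c).choose k
        + a.choose k * (k ! * (((b + c).choose k : ℤ) - b.choose k)) by ring]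
  exact dvd_add (ha.mul_right _) (hb.mul_left _)

end Nat

theorem sigmaLM_of_even {l m : ℕ} (h : (l + m) % 2 = 0) (k : ℕ) :
    sigmaLM l m k = (-1) ^ k * k ! * ((l - m) / 2).choose k * ((l + m) / 2).choose k
      / (2 * k - 1)‼ := by
  have hcb : ((2 * k).choose k : ℚ) * k ! = 2 ^ k * (2 * k - 1)‼ := by
    exact_mod_cast choose_two_mul_mul_factorial k
  have hneg : (-2 : ℚ) ^ k = (-1) ^ k * 2 ^ k := by rw [← mul_pow]; norm_num
  rw [sigmaLM, if_pos h, div_eq_div_iff (by exact_mod_cast (choose_pos (by omega)).ne')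
    (by exact_mod_cast (doubleFactorial_pos _).ne'), hneg]
  linear_combination
    -(-1 : ℚ) ^ k * ((l - m) / 2).choose k * ((l + m) / 2).choose k * hcb

theorem Cong2.symm {a b : ℚ} {N : ℕ} (h : Cong2 a b N) : Cong2 b a N := by
  rwa [Cong2, ← neg_sub, Rat.cast_neg, norm_neg]

theorem cong2_of_sub_eq_div {a b : ℚ} {N d : ℕ} {z : ℤ} (hd : Odd d)
    (hz : (2 : ℤ) ^ N ∣ z) (h : a - b = z / d) : Cong2 a b N := by
  have hd1 : ‖(d : ℚ_[2])‖ = 1 :=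
    Padic.norm_natCast_eq_one_iff.mpr (Nat.coprime_two_left.mpr hd)
  rw [Cong2, h]
  push_cast
  rw [norm_div, hd1, div_one]
  exact_mod_cast (Padic.norm_int_le_pow_iff_dvd z N).mpr hz

theorem sigmaLM_cong_general (m l lt N k : ℕ) (hm : m % 4 = 0) (hl : Even l) (hlt : Even lt)
    (hml : m ≤ l) (hmlt : m ≤ lt) (hk : 6 ≤ k)
    (hcong : lt % 2 ^ N = l % 2 ^ N) :
    Cong2 (sigmaLM lt m k) (sigmaLM l m k) (N + 1) := by
  wlog hle : l ≤ lt generalizing l lt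
  · exact (this lt l hlt hl hmlt hml hcong.symm (by omega)).symm
  obtain ⟨p, rfl⟩ := hl
  obtain ⟨c, rfl⟩ : ∃ c, lt = p + p + 2 * c := ⟨(lt - (p + p)) / 2, by grind⟩
  have hc : 2 ^ N ∣ 2 * c := by
    simpa using (Nat.modEq_iff_dvd' hle).mp hcong.symm
  refine cong2_of_sub_eq_div (d := (2 * k - 1)‼) (odd_doubleFactorial ⟨k - 1, by omega⟩)
    ((two_pow_succ_dvd_factorial_mul_choose_mul_choose_sub hc hk
      ((p + p - m) / 2) ((p + p + m) / 2)).mul_left ((-1) ^ k)) ?_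
  rw [sigmaLM_of_even (by omega), sigmaLM_of_even (by omega),
    show (p + p + 2 * c - m) / 2 = (p + p - m) / 2 + c by omega,
    show (p + p + 2 * c + m) / 2 = (p + p + m) / 2 + c by omega]
  push_cast
  ring

/-- Let `m ≡ 0 (mod 4)`, let `l, l̃` be even with `m ≤ l`, `m ≤ l̃`, let `N ≥ 1` and
`k ≥ 6`. If `l̃ ≡ l (mod 2^N)` then `σ_{l̃}^m(k) ≡ σ_l^m(k) (mod 2^(N+1))`. -/
theorem sigmaLM_cong (m l lt N k : ℕ) (hm : m % 4 = 0) (hl : Even l) (hlt : Even lt)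
    (hml : m ≤ l) (hmlt : m ≤ lt) (hN : 1 ≤ N) (hk : 6 ≤ k)
    (hcong : lt % 2 ^ N = l % 2 ^ N) :
    Cong2 (sigmaLM lt m k) (sigmaLM l m k) (N + 1) :=
  sigmaLM_cong_general m l lt N k hm hl hlt hml hmlt hk hcong
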